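/- arXiv:1901.06301 — 6 statements merged into one kernel-verified Lean document; each statement's English description precedes it below -/
import Mathlib

section
/- For every function f : ℝ × ℝ → ℝ and every integer n ≥ 2, one has S_n(f) = S_{n−1}(σ*f) + S_{n−1}(τ*f), where (σ*f)(x,y) = f(x+y, y) and (τ*f)(x,y) = f(x, x+y). -/
/-- The Stern array: `stern n k` is the entry `s(n,k)` of the Stern array,
with `s(1,1) = 1`, `s(1,k) = 0` for `k ≠ 1`, and
`s(n,2k) = s(n-1,k)`, `s(n,2k+1) = s(n-1,k) + s(n-1,k+1)`. -/
def stern : ℕ → ℤ → ℕ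
  | 0, _ => 0
  | 1, k => if k = 1 then 1 else 0
  | n + 2, k =>
    if k % 2 = 0 then stern (n + 1) (k / 2)
    else stern (n + 1) ((k - 1) / 2) + stern (n + 1) ((k + 1) / 2)

/-- `S n f = ∑_{k=0}^{2^n - 1} f(s(n,k), s(n,k+1))`. -/
noncomputable def S (n : ℕ) (f : ℝ × ℝ → ℝ) : ℝ :=
  ∑ k ∈ Finset.range (2 ^ n), f ((stern n (k : ℤ) : ℝ), (stern n ((k : ℤ) + 1) : ℝ))

/-! Splitting the sum defining `S (n + 2)` into consecutive pairs `(2j, 2j+1)`, the even term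
is `f (a, a + b)` and the odd term is `f (a + b, b)`, where `a = s(n+1, j)` and
`b = s(n+1, j+1)`; so the pair contributes the `j`-th terms of both sums on the right. -/

lemma stern_two_mul (n : ℕ) (j : ℤ) : stern (n + 2) (2 * j) = stern (n + 1) j := by
  have hmod : 2 * j % 2 = 0 := by omega
  have hdiv : 2 * j / 2 = j := by omega
  simp [stern, hmod, hdiv]

lemma stern_two_mul_add_one (n : ℕ) (j : ℤ) :
    stern (n + 2) (2 * j + 1) = stern (n + 1) j + stern (n + 1) (j + 1) := by
  have hmod : (2 * j + 1) % 2 = 1 := by omega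
  have hdiv : (2 * j + 1 + 1) / 2 = j + 1 := by omega
  simp [stern, hmod, hdiv]

lemma Finset.sum_range_two_mul {M : Type*} [AddCommMonoid M] (N : ℕ) (g : ℕ → M) :
    ∑ k ∈ range (2 * N), g k = ∑ j ∈ range N, (g (2 * j) + g (2 * j + 1)) := by
  induction N with
  | zero => simp
  | succ N ih =>
    rw [Nat.mul_succ, sum_range_succ, sum_range_succ, ih, sum_range_succ, add_assoc]

/-- For every `f : ℝ × ℝ → ℝ` and every `n ≥ 2`,
`S n f = S (n-1) (σ* f) + S (n-1) (τ* f)` where `(σ* f)(x,y) = f(x+y,y)` and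
`(τ* f)(x,y) = f(x,x+y)`. -/
theorem S_recurrence (f : ℝ × ℝ → ℝ) (n : ℕ) (hn : 2 ≤ n) :
    S n f = S (n - 1) (fun p => f (p.1 + p.2, p.2)) +
      S (n - 1) (fun p => f (p.1, p.1 + p.2)) := by
  obtain ⟨m, rfl⟩ : ∃ m, n = m + 2 := ⟨n - 2, by omega⟩
  rw [show m + 2 - 1 = m + 1 from rfl, S, S, S, pow_succ', Finset.sum_range_two_mul,
    ← Finset.sum_add_distrib]
  refine Finset.sum_congr rfl fun j _ => ?_
  have hsucc : 2 * (j : ℤ) + 1 + 1 = 2 * ((j : ℤ) + 1) := by ring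
  push_cast
  rw [hsucc, stern_two_mul, stern_two_mul_add_one, stern_two_mul]
  push_cast
  exact add_comm _ _
end

section
/- For all natural numbers r and all a, b with 0 ≤ a, b ≤ r, one has a!·(r−a)!·(C(b,a) + C(r−b,r−a)) = b!·(r−b)!·(C(a,b) + C(r−a,r−b)), where C(m,n) denotes the binomial coefficient (equal to 0 when n > m). Equivalently, the matrix Φ with entries Φ_{ab} = C(b,a) + C(r−b,r−a) becomes symmetric after conjugation by the diagonal matrix D with entries D_{kk} = √(k!(r−k)!). -/
open Nat

/-- Both sides equal `(d + a)! (d + c)! / d!`. -/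
theorem factorial_mul_factorial_mul_add_choose_comm (a c d : ℕ) :
    a ! * (d + c)! * (d + a).choose a = (d + a)! * c ! * (d + c).choose c := by
  refine Nat.eq_of_mul_eq_mul_right (factorial_pos d) ?_
  calc a ! * (d + c)! * (d + a).choose a * d !
      = (d + a).choose a * d ! * a ! * (d + c)! := by ring
    _ = (d + a)! * ((d + c).choose c * d ! * c !) := by
      rw [add_choose_mul_factorial_mul_factorial, add_choose_mul_factorial_mul_factorial]
    _ = (d + a)! * c ! * (d + c).choose c * d ! := by ring

theorem factorial_mul_factorial_sub_mul_choose_comm {r a b : ℕ} (ha : a ≤ r) (hb : b ≤ r) :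
    a ! * (r - a)! * b.choose a = b ! * (r - b)! * (r - a).choose (r - b) := by
  rcases le_or_gt a b with hab | hba
  · obtain ⟨d, rfl⟩ := Nat.exists_eq_add_of_le' hab
    have hra : r - a = d + (r - (d + a)) := by omega
    rw [hra]
    exact factorial_mul_factorial_mul_add_choose_comm a (r - (d + a)) d
  · rw [choose_eq_zero_of_lt hba, choose_eq_zero_of_lt (by omega), mul_zero, mul_zero]

/-- For `0 ≤ a, b ≤ r`, we have
`a! (r-a)! (C(b,a) + C(r-b,r-a)) = b! (r-b)! (C(a,b) + C(r-a,r-b))`;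
i.e. the matrix `Φ_{ab} = C(b,a) + C(r-b,r-a)` becomes symmetric after
conjugation by the diagonal matrix with entries `√(k!(r-k)!)`. -/
theorem phi_conj_symmetric (r a b : ℕ) (ha : a ≤ r) (hb : b ≤ r) :
    Nat.factorial a * Nat.factorial (r - a) *
        (Nat.choose b a + Nat.choose (r - b) (r - a)) =
      Nat.factorial b * Nat.factorial (r - b) *
        (Nat.choose a b + Nat.choose (r - a) (r - b)) := by
  rw [mul_add, mul_add, factorial_mul_factorial_sub_mul_choose_comm ha hb,
    ← factorial_mul_factorial_sub_mul_choose_comm hb ha, add_comm]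
end

section
/- For every natural number r, the operator Φ is diagonalizable over ℝ; that is, the real vector space V of homogeneous polynomials of degree r in two variables has a basis consisting of eigenvectors of Φ with real eigenvalues. -/
open MvPolynomial

/-- The substitution `(σ* f)(x,y) = f(x+y, y)` as a linear endomorphism of the
polynomial ring `ℝ[x,y]`. -/
noncomputable def sigmaStar : MvPolynomial (Fin 2) ℝ →ₗ[ℝ] MvPolynomial (Fin 2) ℝ :=
  (aeval ![X 0 + X 1, X 1]).toLinearMap

/-- The substitution `(τ* f)(x,y) = f(x, x+y)` as a linear endomorphism of the
polynomial ring `ℝ[x,y]`. -/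
noncomputable def tauStar : MvPolynomial (Fin 2) ℝ →ₗ[ℝ] MvPolynomial (Fin 2) ℝ :=
  (aeval ![X 0, X 0 + X 1]).toLinearMap

/-- The operator `Φ : f(x,y) ↦ f(x+y, y) + f(x, x+y)`.  It preserves the space of
homogeneous polynomials of each degree `r`. -/
noncomputable def Phi : MvPolynomial (Fin 2) ℝ →ₗ[ℝ] MvPolynomial (Fin 2) ℝ :=
  sigmaStar + tauStar

namespace PhiDiag

/-- weight for the Bombieri-type inner product -/
noncomputable def w (d : Fin 2 →₀ ℕ) : ℝ := (d 0).factorial * (d 1).factorial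

lemma w_pos (d : Fin 2 →₀ ℕ) : 0 < w d := by
  have h0 := (d 0).factorial_pos
  have h1 := (d 1).factorial_pos
  unfold w
  positivity

/-- the Bombieri-type bilinear form -/
noncomputable def Bil (f g : MvPolynomial (Fin 2) ℝ) : ℝ :=
  ∑ d ∈ f.support ∪ g.support, w d * coeff d f * coeff d g

lemma Bil_eq_sum {f g : MvPolynomial (Fin 2) ℝ} {s : Finset (Fin 2 →₀ ℕ)}
    (hf : f.support ⊆ s) (hg : g.support ⊆ s) :
    Bil f g = ∑ d ∈ s, w d * coeff d f * coeff d g := by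
  refine Finset.sum_subset (Finset.union_subset hf hg) ?_
  intro d _ hd
  rcases Finset.notMem_union.mp hd with ⟨h1, _⟩
  rw [MvPolynomial.notMem_support_iff.mp h1]
  ring

lemma Bil_comm (f g : MvPolynomial (Fin 2) ℝ) : Bil f g = Bil g f := by
  rw [Bil, Bil, Finset.union_comm]
  exact Finset.sum_congr rfl fun d _ => by ring

lemma Bil_add_left (f g h : MvPolynomial (Fin 2) ℝ) :
    Bil (f + g) h = Bil f h + Bil g h := by
  classical
  set s := f.support ∪ g.support ∪ h.support with hs
  rw [Bil_eq_sum (s := s) (MvPolynomial.support_add.trans (by intro x hx; exact Finset.mem_union_left _ hx))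
      (by intro x hx; exact Finset.mem_union_right _ hx),
    Bil_eq_sum (s := s) (by intro x hx; exact Finset.mem_union_left _ (Finset.mem_union_left _ hx))
      (by intro x hx; exact Finset.mem_union_right _ hx),
    Bil_eq_sum (s := s) (by intro x hx; exact Finset.mem_union_left _ (Finset.mem_union_right _ hx))
      (by intro x hx; exact Finset.mem_union_right _ hx),
    ← Finset.sum_add_distrib]
  exact Finset.sum_congr rfl fun d _ => by rw [coeff_add]; ring

lemma Bil_smul_left (c : ℝ) (f g : MvPolynomial (Fin 2) ℝ) :
    Bil (c • f) g = c * Bil f g := by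
  classical
  rw [Bil_eq_sum (s := f.support ∪ g.support)
      ((MvPolynomial.support_smul).trans Finset.subset_union_left) Finset.subset_union_right,
    Bil, Finset.mul_sum]
  exact Finset.sum_congr rfl fun d _ => by rw [coeff_smul]; simp; ring

lemma Bil_add_right (f g h : MvPolynomial (Fin 2) ℝ) :
    Bil f (g + h) = Bil f g + Bil f h := by
  rw [Bil_comm, Bil_add_left, Bil_comm g f, Bil_comm h f]

lemma Bil_zero_left (g : MvPolynomial (Fin 2) ℝ) : Bil 0 g = 0 := by
  simp [Bil]

lemma Bil_sum_left {α : Type*} (s : Finset α) (p : α → MvPolynomial (Fin 2) ℝ)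
    (g : MvPolynomial (Fin 2) ℝ) :
    Bil (∑ k ∈ s, p k) g = ∑ k ∈ s, Bil (p k) g := by
  classical
  induction s using Finset.induction_on with
  | empty => simp [Bil_zero_left]
  | insert _ _ h ih => rw [Finset.sum_insert h, Finset.sum_insert h, Bil_add_left, ih]

lemma Bil_monomial_monomial (d e : Fin 2 →₀ ℕ) (a b : ℝ) :
    Bil (monomial d a) (monomial e b) = if d = e then w d * a * b else 0 := by
  classical
  rw [Bil_eq_sum (s := {d} ∪ {e})
      ((support_monomial_subset).trans Finset.subset_union_left)
      ((support_monomial_subset).trans Finset.subset_union_right)]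
  rcases eq_or_ne d e with rfl | h
  · simp [coeff_monomial]
  · rw [if_neg h]
    refine Finset.sum_eq_zero fun x _ => ?_
    rw [coeff_monomial, coeff_monomial]
    rcases eq_or_ne d x with rfl | hdx
    · rw [if_pos rfl, if_neg fun he => h he.symm]
      ring
    · rw [if_neg hdx]; ring


lemma single_single_eq_iff (k m : ℕ) (e : Fin 2 →₀ ℕ) :
    Finsupp.single 0 k + Finsupp.single 1 m = e ↔ e 0 = k ∧ e 1 = m := by
  constructor
  · rintro rfl
    constructor <;> simp [Finsupp.single_apply]
  · rintro ⟨h0, h1⟩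
    ext i
    fin_cases i <;> simp [Finsupp.single_apply] <;> omega

lemma fin2_repr (d : Fin 2 →₀ ℕ) :
    Finsupp.single 0 (d 0) + Finsupp.single 1 (d 1) = d :=
  (single_single_eq_iff _ _ d).mpr ⟨rfl, rfl⟩

lemma degree_fin2 (d : Fin 2 →₀ ℕ) : d.degree = d 0 + d 1 := by
  rw [Finsupp.degree, ← Fin.sum_univ_two (f := fun i => d i)]
  exact Finset.sum_subset (Finset.subset_univ _) fun i _ hi => Finsupp.notMem_support_iff.mp hi

lemma sigma_monomial (d : Fin 2 →₀ ℕ) (a : ℝ) :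
    sigmaStar (monomial d a) =
      ∑ k ∈ Finset.range (d 0 + 1),
        monomial (Finsupp.single 0 k + Finsupp.single 1 (d 0 - k + d 1))
          (a * ((d 0).choose k : ℝ)) := by
  show (aeval ![X 0 + X 1, X 1]) (monomial d a) = _
  rw [aeval_monomial, Finsupp.prod_fintype _ _ (fun i => pow_zero _), Fin.prod_univ_two]
  simp only [Matrix.cons_val_zero, Matrix.cons_val_one, Matrix.head_cons]
  rw [add_pow, Finset.sum_mul, Finset.mul_sum]
  refine Finset.sum_congr rfl fun k hk => ?_
  have hcast : ((d 0).choose k : MvPolynomial (Fin 2) ℝ) = C ((d 0).choose k : ℝ) := by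
    simp
  rw [hcast, algebraMap_eq]
  rw [X_pow_eq_monomial, X_pow_eq_monomial, X_pow_eq_monomial, monomial_mul,
    mul_right_comm ((monomial _) (1*1)) (C _) ((monomial _) 1), monomial_mul,
    mul_comm ((monomial _) _) (C _), C_mul_monomial, C_mul_monomial]
  congr 1
  · rw [add_assoc, ← Finsupp.single_add]
  · ring

lemma tau_monomial (e : Fin 2 →₀ ℕ) (b : ℝ) :
    tauStar (monomial e b) =
      ∑ j ∈ Finset.range (e 1 + 1),
        monomial (Finsupp.single 0 (e 0 + j) + Finsupp.single 1 (e 1 - j))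
          (b * ((e 1).choose j : ℝ)) := by
  show (aeval ![X 0, X 0 + X 1]) (monomial e b) = _
  rw [aeval_monomial, Finsupp.prod_fintype _ _ (fun i => pow_zero _), Fin.prod_univ_two]
  simp only [Matrix.cons_val_zero, Matrix.cons_val_one, Matrix.head_cons]
  rw [add_pow, Finset.mul_sum, Finset.mul_sum]
  refine Finset.sum_congr rfl fun j hj => ?_
  have hcast : ((e 1).choose j : MvPolynomial (Fin 2) ℝ) = C ((e 1).choose j : ℝ) := by
    simp
  rw [hcast, algebraMap_eq]
  rw [X_pow_eq_monomial, X_pow_eq_monomial, X_pow_eq_monomial, monomial_mul,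
    ← mul_assoc ((monomial _) 1) ((monomial _) (1*1)) (C _), monomial_mul,
    mul_comm ((monomial _) _) (C _), C_mul_monomial, C_mul_monomial]
  congr 1
  · rw [← add_assoc, ← Finsupp.single_add]
  · ring

lemma Bil_sum_right {α : Type*} (s : Finset α) (p : α → MvPolynomial (Fin 2) ℝ)
    (g : MvPolynomial (Fin 2) ℝ) :
    Bil g (∑ k ∈ s, p k) = ∑ k ∈ s, Bil g (p k) := by
  rw [Bil_comm, Bil_sum_left]
  exact Finset.sum_congr rfl fun k _ => Bil_comm _ _

lemma Bil_sigma_mm (d e : Fin 2 →₀ ℕ) (a b : ℝ) :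
    Bil (sigmaStar (monomial d a)) (monomial e b) =
      if e 0 ≤ d 0 ∧ d 0 + d 1 = e 0 + e 1
      then w e * (a * ((d 0).choose (e 0) : ℝ)) * b else 0 := by
  rw [sigma_monomial, Bil_sum_left]
  by_cases H : e 0 ≤ d 0 ∧ d 0 + d 1 = e 0 + e 1
  · obtain ⟨h1, h2⟩ := H
    rw [if_pos ⟨h1, h2⟩]
    rw [Finset.sum_eq_single_of_mem (e 0) (Finset.mem_range.mpr (by omega))
      (fun k hk hne => by
        rw [Bil_monomial_monomial, if_neg]
        intro hc
        exact hne ((single_single_eq_iff _ _ e).mp hc).1.symm)]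
    have hidx : Finsupp.single 0 (e 0) + Finsupp.single 1 (d 0 - e 0 + d 1) = e :=
      (single_single_eq_iff _ _ e).mpr ⟨rfl, by omega⟩
    rw [hidx, Bil_monomial_monomial, if_pos rfl]
  · rw [if_neg H]
    refine Finset.sum_eq_zero fun k hk => ?_
    rw [Bil_monomial_monomial, if_neg]
    intro hc
    obtain ⟨hk0, hk1⟩ := (single_single_eq_iff _ _ e).mp hc
    rw [Finset.mem_range] at hk
    exact H ⟨by omega, by omega⟩

lemma Bil_tau_mm (d e : Fin 2 →₀ ℕ) (a b : ℝ) :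
    Bil (monomial d a) (tauStar (monomial e b)) =
      if e 0 ≤ d 0 ∧ d 0 + d 1 = e 0 + e 1
      then w d * a * (b * ((e 1).choose (d 0 - e 0) : ℝ)) else 0 := by
  rw [tau_monomial, Bil_sum_right]
  by_cases H : e 0 ≤ d 0 ∧ d 0 + d 1 = e 0 + e 1
  · obtain ⟨h1, h2⟩ := H
    rw [if_pos ⟨h1, h2⟩]
    rw [Finset.sum_eq_single_of_mem (d 0 - e 0) (Finset.mem_range.mpr (by omega))
      (fun j hj hne => by
        rw [Bil_monomial_monomial, if_neg]
        intro hc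
        obtain ⟨hj0, hj1⟩ := (single_single_eq_iff _ _ d).mp hc.symm
        exact hne (by omega))]
    have hidx : Finsupp.single 0 (e 0 + (d 0 - e 0)) + Finsupp.single 1 (e 1 - (d 0 - e 0)) = d :=
      (single_single_eq_iff _ _ d).mpr ⟨by omega, by omega⟩
    rw [Bil_monomial_monomial, if_pos hidx.symm]
  · rw [if_neg H]
    refine Finset.sum_eq_zero fun j hj => ?_
    rw [Bil_monomial_monomial, if_neg]
    intro hc
    obtain ⟨hj0, hj1⟩ := (single_single_eq_iff _ _ d).mp hc.symm
    rw [Finset.mem_range] at hj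
    exact H ⟨by omega, by omega⟩

lemma natkey {d0 d1 e0 e1 : ℕ} (h1 : e0 ≤ d0) (h2 : d0 + d1 = e0 + e1) :
    e0.factorial * e1.factorial * d0.choose e0
      = d0.factorial * d1.factorial * e1.choose (d0 - e0) := by
  have h3 : d0 - e0 ≤ e1 := by omega
  have h4 : e1 - (d0 - e0) = d1 := by omega
  have A := Nat.choose_mul_factorial_mul_factorial h1
  have B := Nat.choose_mul_factorial_mul_factorial h3
  rw [h4] at B
  apply Nat.eq_of_mul_eq_mul_right (Nat.factorial_pos (d0 - e0))
  calc e0.factorial * e1.factorial * d0.choose e0 * (d0 - e0).factorial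
      = (d0.choose e0 * e0.factorial * (d0 - e0).factorial) * e1.factorial := by ring
    _ = d0.factorial * e1.factorial := by rw [A]
    _ = d0.factorial * (e1.choose (d0 - e0) * (d0 - e0).factorial * d1.factorial) := by rw [B]
    _ = d0.factorial * d1.factorial * e1.choose (d0 - e0) * (d0 - e0).factorial := by ring

lemma key_mm (d e : Fin 2 →₀ ℕ) (a b : ℝ) :
    Bil (sigmaStar (monomial d a)) (monomial e b)
      = Bil (monomial d a) (tauStar (monomial e b)) := by
  rw [Bil_sigma_mm, Bil_tau_mm]
  by_cases H : e 0 ≤ d 0 ∧ d 0 + d 1 = e 0 + e 1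
  · rw [if_pos H, if_pos H]
    have hnat := natkey H.1 H.2
    have hr : ((e 0).factorial : ℝ) * ((e 1).factorial : ℝ) * ((d 0).choose (e 0) : ℝ)
        = ((d 0).factorial : ℝ) * ((d 1).factorial : ℝ) * ((e 1).choose (d 0 - e 0) : ℝ) := by
      exact_mod_cast congrArg (Nat.cast : ℕ → ℝ) hnat
    unfold w
    linear_combination (a * b) * hr
  · rw [if_neg H, if_neg H]

lemma key (f g : MvPolynomial (Fin 2) ℝ) :
    Bil (sigmaStar f) g = Bil f (tauStar g) := by
  induction f using MvPolynomial.induction_on' with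
  | add p q hp hq => rw [map_add, Bil_add_left, Bil_add_left, hp, hq]
  | monomial d a =>
    induction g using MvPolynomial.induction_on' with
    | add p q hp hq => rw [map_add, Bil_add_right, Bil_add_right, hp, hq]
    | monomial e b => exact key_mm d e a b

lemma key' (f g : MvPolynomial (Fin 2) ℝ) :
    Bil (tauStar f) g = Bil f (sigmaStar g) := by
  rw [Bil_comm, ← key, Bil_comm]

lemma Phi_symm (f g : MvPolynomial (Fin 2) ℝ) : Bil (Phi f) g = Bil f (Phi g) := by
  show Bil (sigmaStar f + tauStar f) g = Bil f (sigmaStar g + tauStar g)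
  rw [Bil_add_left, Bil_add_right, key, key', add_comm]

lemma Bil_self_nonneg (f : MvPolynomial (Fin 2) ℝ) : 0 ≤ Bil f f := by
  refine Finset.sum_nonneg fun d _ => ?_
  rw [mul_assoc]
  exact mul_nonneg (w_pos d).le (mul_self_nonneg _)

lemma Bil_self_eq_zero {f : MvPolynomial (Fin 2) ℝ} (h : Bil f f = 0) : f = 0 := by
  by_contra hne
  obtain ⟨d, hd⟩ := (MvPolynomial.support_nonempty.mpr hne)
  have hpos : 0 < Bil f f := by
    refine Finset.sum_pos' (fun e _ => by
      rw [mul_assoc]; exact mul_nonneg (w_pos e).le (mul_self_nonneg _)) ?_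
    refine ⟨d, Finset.mem_union_left _ hd, ?_⟩
    have hc : coeff d f ≠ 0 := MvPolynomial.mem_support_iff.mp hd
    rw [mul_assoc]
    exact mul_pos (w_pos d) (mul_self_pos.mpr hc)
  linarith

lemma sigma_mem {r : ℕ} {f : MvPolynomial (Fin 2) ℝ}
    (hf : f ∈ homogeneousSubmodule (Fin 2) ℝ r) :
    sigmaStar f ∈ homogeneousSubmodule (Fin 2) ℝ r := by
  rw [mem_homogeneousSubmodule] at hf ⊢
  have hg : ∀ i : Fin 2, (![X 0 + X 1, X 1] i : MvPolynomial (Fin 2) ℝ).IsHomogeneous 1 := by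
    intro i
    fin_cases i
    · simpa using (isHomogeneous_X ℝ (0 : Fin 2)).add (isHomogeneous_X ℝ 1)
    · simpa using isHomogeneous_X ℝ (1 : Fin 2)
  have := hf.aeval _ hg; rw [one_mul] at this; exact this

lemma tau_mem {r : ℕ} {f : MvPolynomial (Fin 2) ℝ}
    (hf : f ∈ homogeneousSubmodule (Fin 2) ℝ r) :
    tauStar f ∈ homogeneousSubmodule (Fin 2) ℝ r := by
  rw [mem_homogeneousSubmodule] at hf ⊢
  have hg : ∀ i : Fin 2, (![X 0, X 0 + X 1] i : MvPolynomial (Fin 2) ℝ).IsHomogeneous 1 := by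
    intro i
    fin_cases i
    · simpa using isHomogeneous_X ℝ (0 : Fin 2)
    · simpa using (isHomogeneous_X ℝ (0 : Fin 2)).add (isHomogeneous_X ℝ 1)
  have := hf.aeval _ hg; rw [one_mul] at this; exact this

lemma phi_mem (r : ℕ) : ∀ f ∈ homogeneousSubmodule (Fin 2) ℝ r,
    Phi f ∈ homogeneousSubmodule (Fin 2) ℝ r := by
  intro f hf
  show sigmaStar f + tauStar f ∈ _
  exact add_mem (sigma_mem hf) (tau_mem hf)

lemma findim (r : ℕ) : FiniteDimensional ℝ (homogeneousSubmodule (Fin 2) ℝ r) := by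
  classical
  refine FiniteDimensional.of_injective
    (LinearMap.pi (fun k : Fin (r + 1) =>
      (lcoeff ℝ (Finsupp.single 0 (k : ℕ) + Finsupp.single 1 (r - (k : ℕ)))).comp
        (homogeneousSubmodule (Fin 2) ℝ r).subtype)) ?_
  rw [← LinearMap.ker_eq_bot, LinearMap.ker_eq_bot']
  intro f hf
  have hf' : ∀ k : Fin (r + 1),
      coeff (Finsupp.single 0 (k : ℕ) + Finsupp.single 1 (r - (k : ℕ))) f.1 = 0 := by
    intro k
    have := congrFun hf k
    simpa [LinearMap.pi_apply, lcoeff] using this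
  have hfh : f.1.IsHomogeneous r := f.2
  apply Subtype.ext
  show f.1 = 0
  ext d
  rw [coeff_zero]
  rcases eq_or_ne d.degree r with hd | hd
  · rw [degree_fin2] at hd
    have hrepr : d = Finsupp.single 0 (d 0) + Finsupp.single 1 (r - d 0) := by
      conv_lhs => rw [← fin2_repr d]
      rw [show d 1 = r - d 0 by omega]
    rw [hrepr]
    simpa using hf' ⟨d 0, by omega⟩
  · exact hfh.coeff_eq_zero hd

noncomputable def core (r : ℕ) : InnerProductSpace.Core ℝ (homogeneousSubmodule (Fin 2) ℝ r) where
  inner f g := Bil f.1 g.1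
  conj_inner_symm f g := by simpa using Bil_comm g.1 f.1
  re_inner_nonneg f := by simpa using Bil_self_nonneg f.1
  add_left f g h := by
    simpa [Submodule.coe_add] using Bil_add_left f.1 g.1 h.1
  smul_left f g c := by
    simpa [Submodule.coe_smul] using Bil_smul_left c f.1 g.1
  definite f h := Subtype.ext (Bil_self_eq_zero h)

end PhiDiag


/-- `Φ` is diagonalizable over `ℝ`: the space `V` of homogeneous polynomials of
degree `r` has a basis consisting of eigenvectors of `Φ` with real eigenvalues. -/
theorem Phi_diagonalizable (r : ℕ) :
    ∃ (ι : Type) (b : Module.Basis ι ℝ (MvPolynomial.homogeneousSubmodule (Fin 2) ℝ r))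
      (μ : ι → ℝ),
      ∀ i, Phi (b i : MvPolynomial (Fin 2) ℝ) = μ i • (b i : MvPolynomial (Fin 2) ℝ) := by
  classical
  haveI := PhiDiag.findim r
  letI cd : InnerProductSpace.Core ℝ (homogeneousSubmodule (Fin 2) ℝ r) := PhiDiag.core r
  letI : NormedAddCommGroup (homogeneousSubmodule (Fin 2) ℝ r) := cd.toNormedAddCommGroup
  letI : InnerProductSpace ℝ (homogeneousSubmodule (Fin 2) ℝ r) := InnerProductSpace.ofCore cd.toCore
  let T : (homogeneousSubmodule (Fin 2) ℝ r) →ₗ[ℝ] (homogeneousSubmodule (Fin 2) ℝ r) :=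
    Phi.restrict (PhiDiag.phi_mem r)
  have hT : T.IsSymmetric := by
    intro f g
    show PhiDiag.Bil (Phi f.1) g.1 = PhiDiag.Bil f.1 (Phi g.1)
    exact PhiDiag.Phi_symm f.1 g.1
  set n := Module.finrank ℝ (homogeneousSubmodule (Fin 2) ℝ r) with hn
  refine ⟨Fin n, (hT.eigenvectorBasis rfl).toBasis, hT.eigenvalues rfl, fun i => ?_⟩
  have h := hT.apply_eigenvectorBasis rfl i
  have h2 := congrArg Subtype.val h
  rw [Submodule.coe_smul] at h2
  simp only [OrthonormalBasis.coe_toBasis]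
  have h3 : Phi ((hT.eigenvectorBasis rfl i : homogeneousSubmodule (Fin 2) ℝ r) : MvPolynomial (Fin 2) ℝ)
      = ((T (hT.eigenvectorBasis rfl i) : homogeneousSubmodule (Fin 2) ℝ r) : MvPolynomial (Fin 2) ℝ) := by
    rw [LinearMap.restrict_apply]
  rw [h3, h2]
  norm_num
end

section
/- For every natural number r, the operator Φ_sym is diagonalizable over ℝ; that is, the quotient space V_sym has a basis consisting of eigenvectors of Φ_sym with real eigenvalues. -/
open MvPolynomial

/-- The swap substitution `f(x,y) ↦ f(y,x)` as a linear endomorphism. -/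
noncomputable def swapStar : MvPolynomial (Fin 2) ℝ →ₗ[ℝ] MvPolynomial (Fin 2) ℝ :=
  (aeval ![X 1, X 0]).toLinearMap

/-- The space `V` of homogeneous polynomials of degree `r` in two variables. -/
noncomputable abbrev V (r : ℕ) : Submodule ℝ (MvPolynomial (Fin 2) ℝ) :=
  MvPolynomial.homogeneousSubmodule (Fin 2) ℝ r

/-- The subspace of `V` spanned by all polynomials of the form `f(x,y) - f(y,x)`. -/
noncomputable def K (r : ℕ) : Submodule ℝ ↥(V r) :=
  Submodule.span ℝ
    {g : ↥(V r) | ∃ f : ↥(V r),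
      (g : MvPolynomial (Fin 2) ℝ) = (f : MvPolynomial (Fin 2) ℝ) - swapStar f}

/-! ### Auxiliary: the Bombieri (apolar) bilinear form -/

local notation "MvP" => MvPolynomial (Fin 2) ℝ

/-- The weight `m! = (m 0)! (m 1)!` of a monomial. -/
noncomputable def w (m : Fin 2 →₀ ℕ) : ℝ := (Nat.factorial (m 0) * Nat.factorial (m 1) : ℕ)

lemma w_pos (m : Fin 2 →₀ ℕ) : 0 < w m := by
  have := Nat.factorial_pos (m 0); have := Nat.factorial_pos (m 1)
  unfold w; positivity

noncomputable def bf (f g : MvP) : ℝ := ∑ m ∈ f.support, w m * coeff m f * coeff m g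

lemma bf_eq_sum {s : Finset (Fin 2 →₀ ℕ)} {f : MvP} (hs : f.support ⊆ s) (g : MvP) :
    bf f g = ∑ m ∈ s, w m * coeff m f * coeff m g := by
  refine Finset.sum_subset hs fun m _ hm => ?_
  rw [MvPolynomial.notMem_support_iff.mp hm]; ring

/-- The Bombieri (apolar) bilinear form `⟨f, g⟩ = ∑ m! f_m g_m`. -/
noncomputable def bform : MvP →ₗ[ℝ] MvP →ₗ[ℝ] ℝ := by
  refine LinearMap.mk₂ ℝ bf ?_ ?_ ?_ ?_
  · intro f f' g
    have h1 := bf_eq_sum (f := f + f') (s := f.support ∪ f'.support ∪ (f + f').support)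
      (by intro x hx; exact Finset.mem_union_right _ hx) g
    have h2 := bf_eq_sum (f := f) (s := f.support ∪ f'.support ∪ (f + f').support)
      (by intro x hx; exact Finset.mem_union_left _ (Finset.mem_union_left _ hx)) g
    have h3 := bf_eq_sum (f := f') (s := f.support ∪ f'.support ∪ (f + f').support)
      (by intro x hx; exact Finset.mem_union_left _ (Finset.mem_union_right _ hx)) g
    rw [h1, h2, h3, ← Finset.sum_add_distrib]
    refine Finset.sum_congr rfl fun m _ => ?_
    rw [MvPolynomial.coeff_add]; ring
  · intro c f g
    have h1 := bf_eq_sum (f := c • f) (s := f.support) MvPolynomial.support_smul g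
    rw [h1, bf, smul_eq_mul, Finset.mul_sum]
    refine Finset.sum_congr rfl fun m _ => ?_
    rw [MvPolynomial.coeff_smul]; simp; ring
  · intro f g g'
    rw [bf, bf, bf, ← Finset.sum_add_distrib]
    refine Finset.sum_congr rfl fun m _ => ?_
    rw [MvPolynomial.coeff_add]; ring
  · intro c f g
    rw [bf, bf, smul_eq_mul, Finset.mul_sum]
    refine Finset.sum_congr rfl fun m _ => ?_
    rw [MvPolynomial.coeff_smul]; simp; ring

lemma bform_apply (f g : MvP) : bform f g = ∑ m ∈ f.support, w m * coeff m f * coeff m g := rfl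

lemma bform_monomial_left (a : Fin 2 →₀ ℕ) (c : ℝ) (g : MvP) :
    bform (monomial a c) g = w a * c * coeff a g := by
  rw [bform_apply, ← bf, bf_eq_sum (s := {a}) MvPolynomial.support_monomial_subset g]
  simp [MvPolynomial.coeff_monomial]

lemma bform_comm (f g : MvP) : bform f g = bform g f := by
  rw [bform_apply, ← bf, bf_eq_sum (s := f.support ∪ g.support) Finset.subset_union_left g,
    bform_apply, ← bf, bf_eq_sum (s := f.support ∪ g.support) Finset.subset_union_right f]
  exact Finset.sum_congr rfl fun m _ => by ring

lemma bform_self_nonneg (f : MvP) : 0 ≤ bform f f := by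
  rw [bform_apply]
  refine Finset.sum_nonneg fun m _ => ?_
  have := w_pos m; nlinarith [sq_nonneg (coeff m f)]

lemma bform_self_pos {f : MvP} (hf : f ≠ 0) : 0 < bform f f := by
  rw [bform_apply]
  refine Finset.sum_pos (fun m hm => ?_) ?_
  · have hc : coeff m f ≠ 0 := MvPolynomial.mem_support_iff.mp hm
    have := w_pos m
    have h2 : 0 < coeff m f * coeff m f := by
      rcases hc.lt_or_gt with h | h
      · exact mul_pos_of_neg_of_neg h h
      · exact mul_pos h h
    calc (0:ℝ) < w m * (coeff m f * coeff m f) := mul_pos this h2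
    _ = w m * coeff m f * coeff m f := by ring
  · rwa [MvPolynomial.support_nonempty]

/-! ### Monomial computations -/

noncomputable def ee (u v : ℕ) : Fin 2 →₀ ℕ := Finsupp.single 0 u + Finsupp.single 1 v

lemma eq_ee (m : Fin 2 →₀ ℕ) : m = ee (m 0) (m 1) := by
  ext i; fin_cases i <;> simp [ee, Finsupp.single_apply]

lemma monomial_ee (u v : ℕ) (c : ℝ) :
    (monomial (ee u v) c : MvP) = C c * (X 0 ^ u * X 1 ^ v) := by
  rw [X_pow_eq_monomial, X_pow_eq_monomial, monomial_mul, one_mul, C_mul_monomial, mul_one, ee]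

lemma monomial_decomp (m : Fin 2 →₀ ℕ) (c : ℝ) :
    (monomial m c : MvP) = C c * (X 0 ^ (m 0) * X 1 ^ (m 1)) := by
  have h := monomial_ee (m 0) (m 1) c
  rwa [← eq_ee m] at h

lemma sigma_monomial (m : Fin 2 →₀ ℕ) (c : ℝ) :
    sigmaStar (monomial m c) = C c * ((X 0 + X 1 : MvP) ^ (m 0) * X 1 ^ (m 1)) := by
  rw [monomial_decomp]
  simp [sigmaStar]

lemma tau_monomial (m : Fin 2 →₀ ℕ) (c : ℝ) :
    tauStar (monomial m c) = C c * ((X 0 : MvP) ^ (m 0) * (X 0 + X 1) ^ (m 1)) := by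
  rw [monomial_decomp]
  simp [tauStar]

lemma sigma_expand (a b : ℕ) :
    ((X 0 + X 1 : MvP) ^ a * X 1 ^ b) =
      ∑ k ∈ Finset.range (a + 1), monomial (ee k (a - k + b)) ((a.choose k : ℝ)) := by
  rw [add_pow, Finset.sum_mul]
  refine Finset.sum_congr rfl fun k hk => ?_
  rw [monomial_ee, map_natCast C]
  rw [pow_add]
  ring

lemma tau_expand (c d : ℕ) :
    ((X 0 : MvP) ^ c * (X 0 + X 1) ^ d) =
      ∑ j ∈ Finset.range (d + 1), monomial (ee (c + j) (d - j)) ((d.choose j : ℝ)) := by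
  rw [add_pow, Finset.mul_sum]
  refine Finset.sum_congr rfl fun j hj => ?_
  rw [monomial_ee, map_natCast C]
  rw [pow_add]
  ring

lemma coeff_sigma (a b : ℕ) (n : Fin 2 →₀ ℕ) :
    coeff n ((X 0 + X 1 : MvP) ^ a * X 1 ^ b) =
      if n 0 ≤ a ∧ n 0 + n 1 = a + b then (a.choose (n 0) : ℝ) else 0 := by
  rw [sigma_expand, coeff_sum]
  simp only [coeff_monomial]
  split_ifs with h
  · obtain ⟨h1, h2⟩ := h
    rw [Finset.sum_eq_single (n 0)]
    · rw [if_pos]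
      rw [eq_ee n]
      congr 1
      · simp [ee, Finsupp.single_apply]
      · simp [ee, Finsupp.single_apply]; omega
    · intro k hk hkn
      rw [if_neg]
      intro he
      refine hkn ?_
      have := congrArg (fun m => m 0) he
      simpa [ee, Finsupp.single_apply] using this
    · intro hn0
      exact absurd (Finset.mem_range.mpr (by omega)) hn0
  · refine Finset.sum_eq_zero fun k hk => ?_
    rw [if_neg]
    intro he
    have h0 : k = n 0 := by
      have := congrArg (fun m => m 0) he
      simpa [ee, Finsupp.single_apply] using this
    have h1 : a - k + b = n 1 := by
      have := congrArg (fun m => m 1) he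
      simpa [ee, Finsupp.single_apply] using this
    rw [Finset.mem_range] at hk
    exact h ⟨by omega, by omega⟩

lemma coeff_tau (c d : ℕ) (m : Fin 2 →₀ ℕ) :
    coeff m ((X 0 : MvP) ^ c * (X 0 + X 1) ^ d) =
      if c ≤ m 0 ∧ m 0 + m 1 = c + d then (d.choose (m 0 - c) : ℝ) else 0 := by
  rw [tau_expand, coeff_sum]
  simp only [coeff_monomial]
  split_ifs with h
  · obtain ⟨h1, h2⟩ := h
    rw [Finset.sum_eq_single (m 0 - c)]
    · rw [if_pos]
      rw [eq_ee m]
      congr 1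
      · simp [ee, Finsupp.single_apply]; omega
      · simp [ee, Finsupp.single_apply]; omega
    · intro j hj hjm
      rw [if_neg]
      intro he
      have := congrArg (fun x => x 0) he
      simp [ee, Finsupp.single_apply] at this
      omega
    · intro hn0
      exact absurd (Finset.mem_range.mpr (by omega)) hn0
  · refine Finset.sum_eq_zero fun j hj => ?_
    rw [if_neg]
    intro he
    have h0 : c + j = m 0 := by
      have := congrArg (fun x => x 0) he
      simpa [ee, Finsupp.single_apply] using this
    have h1 : d - j = m 1 := by
      have := congrArg (fun x => x 1) he
      simpa [ee, Finsupp.single_apply] using this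
    rw [Finset.mem_range] at hj
    exact h ⟨by omega, by omega⟩

lemma arith (m0 m1 n0 n1 : ℕ) (h1 : n0 ≤ m0) (h2 : n0 + n1 = m0 + m1) :
    n0.factorial * n1.factorial * m0.choose n0
      = m0.factorial * m1.factorial * (n1.choose (m0 - n0)) := by
  set d := m0 - n0 with hd
  have e1 : m0.choose n0 * n0.factorial * (m0 - n0).factorial = m0.factorial :=
    Nat.choose_mul_factorial_mul_factorial h1
  have hdn1 : d ≤ n1 := by omega
  have e2 : n1.choose d * d.factorial * (n1 - d).factorial = n1.factorial :=
    Nat.choose_mul_factorial_mul_factorial hdn1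
  have hn1d : n1 - d = m1 := by omega
  rw [hn1d] at e2
  apply Nat.eq_of_mul_eq_mul_right (Nat.factorial_pos d)
  calc n0.factorial * n1.factorial * m0.choose n0 * d.factorial
      = n1.factorial * (m0.choose n0 * n0.factorial * d.factorial) := by ring
    _ = n1.factorial * m0.factorial := by
        rw [show d.factorial = (m0 - n0).factorial from rfl, e1]
    _ = (n1.choose d * d.factorial * m1.factorial) * m0.factorial := by rw [e2]
    _ = m0.factorial * m1.factorial * n1.choose (m0 - n0) * d.factorial := by
        rw [show n1.choose (m0 - n0) = n1.choose d from rfl]; ring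

lemma bform_adj_mono (a b : Fin 2 →₀ ℕ) :
    bform (sigmaStar (monomial a 1)) (monomial b 1)
      = bform (monomial a 1) (tauStar (monomial b 1)) := by
  rw [bform_comm, bform_monomial_left, bform_monomial_left, sigma_monomial, tau_monomial,
    map_one, one_mul, one_mul, coeff_sigma, coeff_tau, mul_one, mul_one]
  by_cases h1 : b 0 ≤ a 0 ∧ b 0 + b 1 = a 0 + a 1
  · rw [if_pos h1, if_pos ⟨h1.1, h1.2.symm⟩]
    have := arith (a 0) (a 1) (b 0) (b 1) h1.1 h1.2
    unfold w
    exact_mod_cast this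
  · rw [if_neg h1, if_neg (fun h => h1 ⟨h.1, h.2.symm⟩), mul_zero, mul_zero]

lemma bform_adj (f g : MvP) : bform (sigmaStar f) g = bform f (tauStar g) := by
  have key : bform.comp sigmaStar = bform.compl₂ tauStar := by
    refine MvPolynomial.linearMap_ext fun s => LinearMap.ext_ring ?_
    refine LinearMap.ext fun g => ?_
    simp only [LinearMap.comp_apply, LinearMap.compl₂_apply]
    induction g using MvPolynomial.induction_on' with
    | monomial t c =>
      have hc : (monomial t c : MvP) = c • monomial t 1 := by
        rw [smul_monomial, smul_eq_mul, mul_one]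
      rw [hc, map_smul, map_smul, map_smul, bform_adj_mono]
    | add p q hp hq =>
      rw [map_add, map_add, map_add, hp, hq]
  have := congrArg (fun T => T f g) key
  simpa using this

lemma bform_adj' (f g : MvP) : bform (tauStar f) g = bform f (sigmaStar g) := by
  rw [bform_comm, ← bform_adj, bform_comm]

lemma bform_Phi (f g : MvP) : bform (Phi f) g = bform f (Phi g) := by
  simp only [Phi, LinearMap.add_apply, map_add, LinearMap.add_apply]
  rw [bform_adj, bform_adj']
  ring

/-! ### `Phi` preserves `V r`, and `V r` is finite-dimensional -/

lemma hom_deg_one : ∀ i : Fin 2, ((![X 0 + X 1, X 1] : Fin 2 → MvP) i).IsHomogeneous 1 := by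
  rw [Fin.forall_fin_two]
  constructor
  · simpa using ((isHomogeneous_X ℝ (0 : Fin 2)).add (isHomogeneous_X ℝ 1))
  · simpa using isHomogeneous_X ℝ (1 : Fin 2)

lemma hom_deg_one' : ∀ i : Fin 2, ((![X 0, X 0 + X 1] : Fin 2 → MvP) i).IsHomogeneous 1 := by
  rw [Fin.forall_fin_two]
  constructor
  · simpa using isHomogeneous_X ℝ (0 : Fin 2)
  · simpa using ((isHomogeneous_X ℝ (0 : Fin 2)).add (isHomogeneous_X ℝ 1))

lemma Phi_mem_V {r : ℕ} : ∀ f ∈ V r, Phi f ∈ V r := by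
  intro f hf
  rw [mem_homogeneousSubmodule] at hf
  have hs : (sigmaStar f).IsHomogeneous r := by
    simpa [sigmaStar] using hf.aeval _ hom_deg_one
  have ht : (tauStar f).IsHomogeneous r := by
    simpa [tauStar] using hf.aeval _ hom_deg_one'
  exact Submodule.add_mem _ hs ht

instance V_findim (r : ℕ) : FiniteDimensional ℝ ↥(V r) := by
  have hle : V r ≤ MvPolynomial.restrictTotalDegree (Fin 2) ℝ r := by
    intro p hp
    rw [MvPolynomial.mem_restrictTotalDegree]
    exact ((mem_homogeneousSubmodule _ _).mp hp).totalDegree_le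
  exact FiniteDimensional.of_injective (Submodule.inclusion hle) (Submodule.inclusion_injective hle)

/-- `Φ_sym` is diagonalizable over `ℝ`: the quotient `V_sym = V / K` has a basis
consisting of eigenvectors of `Φ_sym` with real eigenvalues.  Here `Φ_sym` is the
operator induced by `Φ` on the quotient, characterized by the compatibility
hypothesis `hsym`. -/
theorem PhiSym_diagonalizable (r : ℕ) (PhiSym : (↥(V r) ⧸ K r) →ₗ[ℝ] (↥(V r) ⧸ K r))
    (hsym : ∀ f g : ↥(V r),
      Phi (f : MvPolynomial (Fin 2) ℝ) = (g : MvPolynomial (Fin 2) ℝ) →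
      PhiSym (Submodule.Quotient.mk f) = Submodule.Quotient.mk g) :
    ∃ (ι : Type) (b : Module.Basis ι ℝ (↥(V r) ⧸ K r)) (μ : ι → ℝ),
      ∀ i, PhiSym (b i) = μ i • b i := by
  classical
  -- Equip `V r` with the Bombieri inner product.
  let core : InnerProductSpace.Core ℝ ↥(V r) :=
    { inner := fun f g => bform (f : MvP) (g : MvP)
      conj_inner_symm := fun f g => by simpa using bform_comm (g : MvP) (f : MvP)
      re_inner_nonneg := fun f => by simpa using bform_self_nonneg (f : MvP)
      add_left := fun f g h => by
        simp only [Submodule.coe_add, map_add, LinearMap.add_apply]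
      smul_left := fun f g a => by
        simp only [SetLike.val_smul, map_smul, LinearMap.smul_apply, smul_eq_mul,
          RCLike.star_def, starRingEnd_apply, star_trivial]
      definite := fun f hf => by
        by_contra h
        have hne : (f : MvP) ≠ 0 := fun h0 => h (Subtype.coe_injective h0)
        exact (bform_self_pos hne).ne' hf }
  letI : NormedAddCommGroup ↥(V r) := core.toNormedAddCommGroup
  letI : InnerProductSpace ℝ ↥(V r) := InnerProductSpace.ofCore core.toCore
  have hinner : ∀ f g : ↥(V r), (inner ℝ f g : ℝ) = bform (f : MvP) (g : MvP) := fun _ _ => rfl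
  -- The restriction of `Phi` to `V r` is a symmetric operator.
  set PhiV : ↥(V r) →ₗ[ℝ] ↥(V r) := Phi.restrict Phi_mem_V with hPhiV
  have hPhiV_coe : ∀ f : ↥(V r), ((PhiV f : ↥(V r)) : MvP) = Phi (f : MvP) := fun f => rfl
  have hsymm : PhiV.IsSymmetric := by
    intro x y
    rw [hinner, hinner, hPhiV_coe, hPhiV_coe]
    exact bform_Phi (x : MvP) (y : MvP)
  -- Spectral theorem: eigenbasis of `PhiV`.
  set n := Module.finrank ℝ ↥(V r) with hn
  have hfr : Module.finrank ℝ ↥(V r) = n := rfl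
  let b := hsymm.eigenvectorBasis hfr
  let μ := hsymm.eigenvalues hfr
  have heig : ∀ i, PhiV (b i) = μ i • b i := fun i =>
    hsymm.apply_eigenvectorBasis hfr i
  -- Push everything down to the quotient.
  set Q := (↥(V r) ⧸ K r)
  let q : ↥(V r) →ₗ[ℝ] Q := (K r).mkQ
  let cfam : Fin n → Q := fun i => q (b i)
  have hspan : Submodule.span ℝ (Set.range cfam) = ⊤ := by
    have h1 : Set.range cfam = q '' (Set.range fun i => b i) := by
      rw [← Set.range_comp]; rfl
    rw [h1, Submodule.span_image]
    have h2 : Submodule.span ℝ (Set.range fun i => b i) = ⊤ := by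
      have := (b.toBasis).span_eq
      rwa [OrthonormalBasis.coe_toBasis] at this
    rw [h2, Submodule.map_top, Submodule.range_mkQ]
  have heig' : ∀ i, PhiSym (cfam i) = μ i • cfam i := by
    intro i
    have h1 : Phi ((b i : ↥(V r)) : MvP) = ((PhiV (b i) : ↥(V r)) : MvP) := (hPhiV_coe _).symm
    have h2 := hsym (b i) (PhiV (b i)) h1
    rw [heig i] at h2
    have h3 : cfam i = Submodule.Quotient.mk (b i) := rfl
    rw [h3, h2, Submodule.Quotient.mk_smul]
  -- Extract a basis from the spanning family of eigenvectors.
  obtain ⟨s, hst, hspan2, hli⟩ := exists_linearIndependent ℝ (Set.range cfam)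
  have hsp : ⊤ ≤ Submodule.span ℝ (Set.range ((↑) : s → Q)) := by
    rw [Subtype.range_coe, hspan2, hspan]
  refine ⟨↥s, Module.Basis.mk hli hsp, fun x => μ (Classical.choose (hst x.2)), fun x => ?_⟩
  have hx : cfam (Classical.choose (hst x.2)) = (x : Q) := Classical.choose_spec (hst x.2)
  rw [Module.Basis.mk_apply, ← hx, heig']
end

section
/- Let r be an odd natural number. Then the dimension over ℝ of the kernel of Φ (the eigenspace of Φ for the eigenvalue 0) is at least (r−1)/3 if r ≡ 1 (mod 6), at least (r+3)/3 if r ≡ 3 (mod 6), and at least (r+1)/3 if r ≡ 5 (mod 6). -/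
open MvPolynomial

/-- The kernel of `Φ` acting on the space `V` of homogeneous polynomials of
degree `r`, i.e. the eigenspace of `Φ : V → V` for the eigenvalue `0`. -/
noncomputable def kerPhi (r : ℕ) : Submodule ℝ (MvPolynomial (Fin 2) ℝ) :=
  MvPolynomial.homogeneousSubmodule (Fin 2) ℝ r ⊓ LinearMap.ker Phi

noncomputable def dP : MvPolynomial (Fin 2) ℝ := X 0 * X 1 * (X 0 - X 1)
noncomputable def hP : MvPolynomial (Fin 2) ℝ := X 0 ^ 3 - 3 * (X 0 * X 1 ^ 2) + X 1 ^ 3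
noncomputable def eP : MvPolynomial (Fin 2) ℝ := X 0 ^ 2 - X 0 * X 1 + X 1 ^ 2
noncomputable def rho : MvPolynomial (Fin 2) ℝ →ₐ[ℝ] MvPolynomial (Fin 2) ℝ := aeval ![X 0 - X 1, X 0]

lemma rho_d : rho dP = -dP := by simp [rho, dP]; ring
lemma rho_h : rho hP = -hP := by simp [rho, hP, map_ofNat]; ring
lemma rho_e : rho eP = eP := by simp [rho, eP]; ring

lemma tau_eq (f : MvPolynomial (Fin 2) ℝ) : tauStar f = sigmaStar (rho f) := by
  have : (aeval ![X 0 + X 1, X 1]).comp rho = (aeval ![X 0, X 0 + X 1] :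
      MvPolynomial (Fin 2) ℝ →ₐ[ℝ] MvPolynomial (Fin 2) ℝ) := by
    apply MvPolynomial.algHom_ext
    intro i
    fin_cases i <;> simp [rho]
  calc tauStar f = ((aeval ![X 0 + X 1, X 1]).comp rho) f := by rw [this]; rfl
    _ = sigmaStar (rho f) := rfl

lemma phi_eq_zero {f : MvPolynomial (Fin 2) ℝ} (hf : rho f = -f) : Phi f = 0 := by
  have : Phi f = sigmaStar f + tauStar f := rfl
  rw [this, tau_eq, hf, map_neg, add_neg_cancel]

noncomputable def Fam (r k : ℕ) : MvPolynomial (Fin 2) ℝ :=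
  if k % 2 = 0 then hP * dP ^ k * eP ^ ((r - 3*k - 3)/2) else dP ^ k * eP ^ ((r - 3*k)/2)

lemma rho_Fam (r k : ℕ) : rho (Fam r k) = -(Fam r k) := by
  unfold Fam
  rcases Nat.even_or_odd k with hk | hk
  · rw [if_pos (Nat.even_iff.mp hk)]
    rw [map_mul, map_mul, map_pow, map_pow, rho_d, rho_h, rho_e, hk.neg_pow]
    ring
  · rw [if_neg (by have := Nat.odd_iff.mp hk; omega : ¬ k % 2 = 0)]
    rw [map_mul, map_pow, map_pow, rho_d, rho_e, hk.neg_pow]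
    ring

lemma dP_hom : dP.IsHomogeneous 3 :=
  ((isHomogeneous_X ℝ 0).mul (isHomogeneous_X ℝ 1)).mul
    ((isHomogeneous_X ℝ 0).sub (isHomogeneous_X ℝ 1))

lemma eP_hom : eP.IsHomogeneous 2 :=
  (((isHomogeneous_X ℝ 0).pow 2).sub ((isHomogeneous_X ℝ 0).mul (isHomogeneous_X ℝ 1))).add
    ((isHomogeneous_X ℝ 1).pow 2)

lemma hP_hom : hP.IsHomogeneous 3 := by
  have h3 : ((3 : MvPolynomial (Fin 2) ℝ)).IsHomogeneous 0 := by
    have := isHomogeneous_C (σ := Fin 2) (3 : ℝ)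
    rw [map_ofNat] at this
    exact this
  have : ((3 : MvPolynomial (Fin 2) ℝ) * (X 0 * X 1 ^ 2)).IsHomogeneous 3 := by
    have := h3.mul ((isHomogeneous_X ℝ 0).mul ((isHomogeneous_X ℝ 1).pow 2))
    simpa using this
  exact (((isHomogeneous_X ℝ 0).pow 3).sub this).add ((isHomogeneous_X ℝ 1).pow 3)

lemma Fam_hom (r k : ℕ) (hr : r % 2 = 1)
    (hke : k % 2 = 0 → 3*k + 3 ≤ r) (hko : k % 2 = 1 → 3*k ≤ r) :
    (Fam r k).IsHomogeneous r := by
  unfold Fam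
  rcases Nat.even_or_odd k with hk | hk
  · have hk' := Nat.even_iff.mp hk
    rw [if_pos hk']
    have h : (hP * dP ^ k * eP ^ ((r - 3*k - 3)/2)).IsHomogeneous (3 + 3*k + 2*((r - 3*k - 3)/2)) :=
      (hP_hom.mul (dP_hom.pow k)).mul (eP_hom.pow ((r - 3*k - 3)/2))
    have e : 3 + 3*k + 2*((r - 3*k - 3)/2) = r := by have := hke hk'; omega
    simpa only [e] using h
  · have hk' := Nat.odd_iff.mp hk
    rw [if_neg (by omega : ¬ k % 2 = 0)]
    have h : (dP ^ k * eP ^ ((r - 3*k)/2)).IsHomogeneous (3*k + 2*((r - 3*k)/2)) :=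
      (dP_hom.pow k).mul (eP_hom.pow ((r - 3*k)/2))
    have e : 3*k + 2*((r - 3*k)/2) = r := by have := hko hk'; omega
    simpa only [e] using h

noncomputable def deh : MvPolynomial (Fin 2) ℝ →ₐ[ℝ] Polynomial ℝ :=
  aeval ![1, Polynomial.X]

lemma deh_d : deh dP = Polynomial.X - Polynomial.X ^ 2 := by
  simp [deh, dP]; ring
lemma deh_e : deh eP = 1 - Polynomial.X + Polynomial.X ^ 2 := by
  simp [deh, eP]
lemma deh_h : deh hP = 1 - 3 * Polynomial.X ^ 2 + Polynomial.X ^ 3 := by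
  simp [deh, hP, map_ofNat]

lemma deh_d_deg : (deh dP).natDegree = 2 := by rw [deh_d]; compute_degree!
lemma deh_e_deg : (deh eP).natDegree = 2 := by rw [deh_e]; compute_degree!
lemma deh_h_deg : (deh hP).natDegree = 3 := by rw [deh_h]; compute_degree!

lemma deh_d_ne : deh dP ≠ 0 := fun h => by simpa [h] using deh_d_deg
lemma deh_e_ne : deh eP ≠ 0 := fun h => by simpa [h] using deh_e_deg
lemma deh_h_ne : deh hP ≠ 0 := fun h => by simpa [h] using deh_h_deg

lemma deh_Fam_ne (r k : ℕ) : deh (Fam r k) ≠ 0 := by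
  unfold Fam
  rcases Nat.even_or_odd k with hk | hk
  · rw [if_pos (Nat.even_iff.mp hk)]
    simp only [map_mul, map_pow]
    exact mul_ne_zero (mul_ne_zero deh_h_ne (pow_ne_zero _ deh_d_ne)) (pow_ne_zero _ deh_e_ne)
  · rw [if_neg (by have := Nat.odd_iff.mp hk; omega : ¬ k % 2 = 0)]
    simp only [map_mul, map_pow]
    exact mul_ne_zero (pow_ne_zero _ deh_d_ne) (pow_ne_zero _ deh_e_ne)

lemma deh_Fam_deg (r k : ℕ) (hr : r % 2 = 1)
    (hke : k % 2 = 0 → 3*k + 3 ≤ r) (hko : k % 2 = 1 → 3*k ≤ r) :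
    (deh (Fam r k)).natDegree = r - k := by
  unfold Fam
  rcases Nat.even_or_odd k with hk | hk
  · have hk' := Nat.even_iff.mp hk
    rw [if_pos hk']
    simp only [map_mul, map_pow]
    rw [Polynomial.natDegree_mul (mul_ne_zero deh_h_ne (pow_ne_zero _ deh_d_ne))
        (pow_ne_zero _ deh_e_ne),
      Polynomial.natDegree_mul deh_h_ne (pow_ne_zero _ deh_d_ne),
      Polynomial.natDegree_pow, Polynomial.natDegree_pow, deh_d_deg, deh_e_deg, deh_h_deg]
    have := hke hk'; omega
  · have hk' := Nat.odd_iff.mp hk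
    rw [if_neg (by omega : ¬ k % 2 = 0)]
    simp only [map_mul, map_pow]
    rw [Polynomial.natDegree_mul (pow_ne_zero _ deh_d_ne) (pow_ne_zero _ deh_e_ne),
      Polynomial.natDegree_pow, Polynomial.natDegree_pow, deh_d_deg, deh_e_deg]
    have := hko hk'; omega

lemma linIndep_of_deg {n : ℕ} (p : Fin n → Polynomial ℝ) (h0 : ∀ k, p k ≠ 0)
    (hd : ∀ i j : Fin n, i < j → (p i).natDegree < (p j).natDegree) :
    LinearIndependent ℝ p := by
  induction n with
  | zero => exact linearIndependent_empty_type
  | succ n ih =>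
    rw [linearIndependent_fin_succ']
    refine ⟨ih (Fin.init p) (fun k => h0 _)
      (fun i j hij => hd _ _ (by simpa using hij)), ?_⟩
    intro hmem
    have hspan : Submodule.span ℝ (Set.range (Fin.init p)) ≤
        Polynomial.degreeLT ℝ ((p (Fin.last n)).natDegree) := by
      rw [Submodule.span_le]
      rintro _ ⟨i, rfl⟩
      rw [SetLike.mem_coe, Polynomial.mem_degreeLT]
      show (p i.castSucc).degree < ((p (Fin.last n)).natDegree : WithBot ℕ)
      have h1 : (p i.castSucc).degree ≤ ((p i.castSucc).natDegree : WithBot ℕ) :=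
        Polynomial.degree_le_natDegree
      have h2 : (((p i.castSucc).natDegree : ℕ) : WithBot ℕ) <
          ((p (Fin.last n)).natDegree : WithBot ℕ) := by
        exact_mod_cast hd _ _ (Fin.castSucc_lt_last i)
      exact lt_of_le_of_lt h1 h2
    have hlt := Polynomial.mem_degreeLT.mp (hspan hmem)
    rw [Polynomial.degree_eq_natDegree (h0 _)] at hlt
    exact lt_irrefl _ (by exact_mod_cast hlt)

lemma main_bound (r : ℕ) (hr : r % 2 = 1) :
    2 * ((r + 3) / 6) ≤ Module.finrank ℝ (kerPhi r) := by
  have hle : kerPhi r ≤ restrictTotalDegree (Fin 2) ℝ r := by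
    intro f hf
    rw [mem_restrictTotalDegree]
    exact ((mem_homogeneousSubmodule _ _).mp hf.1).totalDegree_le
  haveI : FiniteDimensional ℝ (kerPhi r) := Submodule.finiteDimensional_of_le hle
  set N := 2 * ((r + 3) / 6) with hN
  have hke : ∀ k : ℕ, k < N → (k % 2 = 0 → 3*k+3 ≤ r) := by intro k hk h; omega
  have hko : ∀ k : ℕ, k < N → (k % 2 = 1 → 3*k ≤ r) := by intro k hk h; omega
  have h3N : ∀ k : ℕ, k < N → 3*k ≤ r := by intro k hk; omega
  have hmem : ∀ k : Fin N, Fam r (k : ℕ) ∈ kerPhi r := by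
    intro k
    refine Submodule.mem_inf.mpr ⟨?_, ?_⟩
    · exact (mem_homogeneousSubmodule _ _).mpr
        (Fam_hom r k hr (hke k k.isLt) (hko k k.isLt))
    · exact LinearMap.mem_ker.mpr (phi_eq_zero (rho_Fam r k))
  have hq : LinearIndependent ℝ fun k : Fin N => deh (Fam r ((Fin.rev k : Fin N) : ℕ)) := by
    apply linIndep_of_deg
    · intro k; exact deh_Fam_ne _ _
    · intro i j hij
      rw [deh_Fam_deg r _ hr (hke _ (Fin.rev i).isLt) (hko _ (Fin.rev i).isLt),
          deh_Fam_deg r _ hr (hke _ (Fin.rev j).isLt) (hko _ (Fin.rev j).isLt)]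
      have h1 : ((Fin.rev i : Fin N) : ℕ) = N - 1 - (i : ℕ) := by rw [Fin.val_rev]; omega
      have h2 : ((Fin.rev j : Fin N) : ℕ) = N - 1 - (j : ℕ) := by rw [Fin.val_rev]; omega
      have h3 := h3N _ (Fin.rev i).isLt
      have hi := i.isLt; have hj := j.isLt
      have hij' : (i : ℕ) < (j : ℕ) := hij
      omega
  have hFam : LinearIndependent ℝ fun k : Fin N => Fam r (k : ℕ) := by
    apply LinearIndependent.of_comp deh.toLinearMap
    have h := hq.comp Fin.rev Fin.rev_injective
    convert h using 1
    funext k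
    simp [Function.comp, Fin.rev_rev]
    all_goals rfl
  have hv : LinearIndependent ℝ fun k : Fin N => (⟨Fam r (k : ℕ), hmem k⟩ : kerPhi r) := by
    apply LinearIndependent.of_comp (kerPhi r).subtype
    exact hFam
  simpa using hv.fintype_card_le_finrank


/-- For odd `r`, the dimension of the kernel of `Φ` on `V` is at least `(r-1)/3` if
`r ≡ 1 (mod 6)`, at least `(r+3)/3` if `r ≡ 3 (mod 6)`, and at least `(r+1)/3` if
`r ≡ 5 (mod 6)`. -/
theorem dim_ker_Phi (r : ℕ) (hr : Odd r) :
    (r % 6 = 1 → (r - 1) / 3 ≤ Module.finrank ℝ ↥(kerPhi r)) ∧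
    (r % 6 = 3 → (r + 3) / 3 ≤ Module.finrank ℝ ↥(kerPhi r)) ∧
    (r % 6 = 5 → (r + 1) / 3 ≤ Module.finrank ℝ ↥(kerPhi r)) := by
  have hb := main_bound r (Nat.odd_iff.mp hr)
  refine ⟨fun h6 => le_trans (by omega) hb, fun h6 => le_trans (by omega) hb,
    fun h6 => le_trans (by omega) hb⟩
end

section
/- Let r be an odd natural number. Then the dimension over ℝ of the kernel of Φ_sym (the eigenspace of Φ_sym for the eigenvalue 0) is at least (r−1)/6 if r ≡ 1 (mod 6), at least (r+3)/6 if r ≡ 3 (mod 6), and at least (r+1)/6 if r ≡ 5 (mod 6). -/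
open MvPolynomial

/-! The cubic `p = (x+y)(2x-y)(x-2y)` and the quadratic `q = x² - xy + y²` are symmetric, and
`p(x+y, y) = -p(x, x+y)`, `q(x+y, y) = q(x, x+y)`; hence `Φ` kills `p^m q^a` for every odd `m`.
For odd `r` there are `(r+3)/6` such products with `3m + 2a = r`. They are linearly independent:
after setting `x = 1`, `y = t - 1` the product vanishes to order exactly `m` at `t = 0`. Since `K`
consists of antisymmetric polynomials, it meets the symmetric ones trivially, so the products
stay independent in `V_sym`. -/
theorem Polynomial.linearIndependent_of_injective_natTrailingDegree {R ι : Type*} [Ring R]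
    [NoZeroDivisors R] {f : ι → Polynomial R} (hf : ∀ i, f i ≠ 0)
    (hinj : Function.Injective fun i => (f i).natTrailingDegree) : LinearIndependent R f := by
  classical
  rw [linearIndependent_iff']
  intro s g hsum i hi
  by_contra hgi
  obtain ⟨j, hj, hmin⟩ := (s.filter fun j => g j ≠ 0).exists_min_image
    (fun j => (f j).natTrailingDegree) ⟨i, Finset.mem_filter.2 ⟨hi, hgi⟩⟩
  rw [Finset.mem_filter] at hj
  have hcoeff := congrArg (Polynomial.coeff · (f j).natTrailingDegree) hsum
  simp only [Polynomial.finsetSum_coeff, Polynomial.coeff_smul, Polynomial.coeff_zero] at hcoeff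
  rw [Finset.sum_eq_single j] at hcoeff
  · exact mul_ne_zero hj.2 (mt Polynomial.trailingCoeff_eq_zero.1 (hf j)) hcoeff
  · intro k hk hkj
    by_cases hgk : g k = 0
    · rw [hgk, zero_smul]
    · rw [Polynomial.coeff_eq_zero_of_lt_natTrailingDegree, smul_zero]
      exact (hmin k (Finset.mem_filter.2 ⟨hk, hgk⟩)).lt_of_ne (hinj.ne hkj.symm)
  · exact fun h => (h hj.1).elim

instance MvPolynomial.finite_homogeneousSubmodule {σ R : Type*} [CommSemiring R] [Finite σ]
    (n : ℕ) : Module.Finite R (homogeneousSubmodule σ R n) :=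
  Module.Finite.iff_fg.2 (homogeneousSubmodule_fg σ R n)

lemma swapStar_swapStar (p : MvPolynomial (Fin 2) ℝ) : swapStar (swapStar p) = p := by
  have h : (aeval ![X 1, X 0]).comp (aeval ![X 1, X 0]) =
      AlgHom.id ℝ (MvPolynomial (Fin 2) ℝ) := by
    ext i; fin_cases i <;> simp
  exact DFunLike.congr_fun h p

noncomputable def cubic : MvPolynomial (Fin 2) ℝ :=
  (X 0 + X 1) * (2 * X 0 - X 1) * (X 0 - 2 * X 1)

noncomputable def quadratic : MvPolynomial (Fin 2) ℝ :=
  X 0 ^ 2 - X 0 * X 1 + X 1 ^ 2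

lemma tauStar_cubic : tauStar cubic = -sigmaStar cubic := by
  simp only [tauStar, sigmaStar, cubic, AlgHom.toLinearMap_apply, map_add, map_sub, map_mul,
    map_ofNat, aeval_X, Matrix.cons_val_zero, Matrix.cons_val_one]
  ring

lemma tauStar_quadratic : tauStar quadratic = sigmaStar quadratic := by
  simp only [tauStar, sigmaStar, quadratic, AlgHom.toLinearMap_apply, map_add, map_sub, map_mul,
    map_pow, aeval_X, Matrix.cons_val_zero, Matrix.cons_val_one]
  ring

lemma swapStar_cubic : swapStar cubic = cubic := by
  simp only [swapStar, cubic, AlgHom.toLinearMap_apply, map_add, map_sub, map_mul, map_ofNat,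
    aeval_X, Matrix.cons_val_zero, Matrix.cons_val_one]
  ring

lemma swapStar_quadratic : swapStar quadratic = quadratic := by
  simp only [swapStar, quadratic, AlgHom.toLinearMap_apply, map_add, map_sub, map_mul, map_pow,
    aeval_X, Matrix.cons_val_zero, Matrix.cons_val_one]
  ring

lemma isHomogeneous_cubic : cubic.IsHomogeneous 3 := by
  have hX := isHomogeneous_X ℝ (σ := Fin 2)
  have h2X : ∀ i, (2 * X i : MvPolynomial (Fin 2) ℝ).IsHomogeneous 1 := fun i => by
    rw [← map_ofNat C 2]
    exact isHomogeneous_C_mul_X 2 i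
  exact (((hX 0).add (hX 1)).mul ((h2X 0).sub (hX 1))).mul ((hX 0).sub (h2X 1))

lemma isHomogeneous_quadratic : quadratic.IsHomogeneous 2 := by
  have hX := isHomogeneous_X ℝ (σ := Fin 2)
  exact (((isHomogeneous_X_pow 0 2).sub ((hX 0).mul (hX 1))).add (isHomogeneous_X_pow 1 2))

lemma Phi_cubic_pow_mul_quadratic_pow {m : ℕ} (hm : Odd m) (a : ℕ) :
    Phi (cubic ^ m * quadratic ^ a) = 0 := by
  have hc := tauStar_cubic
  have hq := tauStar_quadratic
  simp only [Phi, sigmaStar, tauStar, LinearMap.add_apply, AlgHom.toLinearMap_apply, map_mul,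
    map_pow] at hc hq ⊢
  rw [hc, hq, hm.neg_pow, neg_mul, add_neg_cancel]

lemma swapStar_cubic_pow_mul_quadratic_pow (m a : ℕ) :
    swapStar (cubic ^ m * quadratic ^ a) = cubic ^ m * quadratic ^ a := by
  have hc := swapStar_cubic
  have hq := swapStar_quadratic
  simp only [swapStar, AlgHom.toLinearMap_apply, map_mul, map_pow] at hc hq ⊢
  rw [hc, hq]

lemma cubic_pow_mul_quadratic_pow_mem_V (m a : ℕ) :
    cubic ^ m * quadratic ^ a ∈ V (3 * m + 2 * a) :=
  (isHomogeneous_cubic.pow m).mul (isHomogeneous_quadratic.pow a)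

noncomputable def dehomogenize : MvPolynomial (Fin 2) ℝ →ₐ[ℝ] Polynomial ℝ :=
  aeval ![1, Polynomial.X - 1]

lemma dehomogenize_cubic :
    dehomogenize cubic = Polynomial.X * ((3 - Polynomial.X) * (3 - 2 * Polynomial.X)) := by
  simp only [dehomogenize, cubic, map_add, map_sub, map_mul, map_ofNat, aeval_X,
    Matrix.cons_val_zero, Matrix.cons_val_one]
  ring

lemma dehomogenize_quadratic :
    dehomogenize quadratic = Polynomial.X ^ 2 - 3 * Polynomial.X + 3 := by
  simp only [dehomogenize, quadratic, map_add, map_sub, map_mul, map_pow, aeval_X,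
    Matrix.cons_val_zero, Matrix.cons_val_one]
  ring

lemma natTrailingDegree_dehomogenize_cubic_pow_mul_quadratic_pow (m a : ℕ) :
    (dehomogenize (cubic ^ m * quadratic ^ a)).natTrailingDegree = m := by
  set cofactor : Polynomial ℝ := ((3 - Polynomial.X) * (3 - 2 * Polynomial.X)) ^ m *
    (Polynomial.X ^ 2 - 3 * Polynomial.X + 3) ^ a
  have hcofactor : cofactor.coeff 0 ≠ 0 := by
    rw [Polynomial.coeff_zero_eq_eval_zero]
    norm_num [cofactor]
  have hfactor : dehomogenize (cubic ^ m * quadratic ^ a) = cofactor * Polynomial.X ^ m := by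
    rw [map_mul, map_pow, map_pow, dehomogenize_cubic, dehomogenize_quadratic, mul_pow]
    ring
  have hne : cofactor ≠ 0 := fun h => hcofactor (by rw [h, Polynomial.coeff_zero])
  rw [hfactor, Polynomial.natTrailingDegree_mul_X_pow hne,
    Polynomial.natTrailingDegree_eq_zero.2 (Or.inr hcofactor), zero_add]

lemma dehomogenize_cubic_pow_mul_quadratic_pow_ne_zero (m a : ℕ) :
    dehomogenize (cubic ^ m * quadratic ^ a) ≠ 0 := by
  intro h
  have h1 := congrArg (Polynomial.eval 1) h
  norm_num [dehomogenize_cubic, dehomogenize_quadratic] at h1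

lemma linearIndependent_cubic_pow_mul_quadratic_pow (a : ℕ → ℕ) :
    LinearIndependent ℝ fun m => cubic ^ m * quadratic ^ a m := by
  have hdeg := fun m => natTrailingDegree_dehomogenize_cubic_pow_mul_quadratic_pow m (a m)
  refine LinearIndependent.of_comp dehomogenize.toLinearMap
    (Polynomial.linearIndependent_of_injective_natTrailingDegree (fun m h => ?_) fun m n h => ?_)
  · exact dehomogenize_cubic_pow_mul_quadratic_pow_ne_zero m (a m) h
  · simpa only [Function.comp_apply, AlgHom.toLinearMap_apply, hdeg] using h

section Quotient

variable {r : ℕ}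

lemma K_le_eqLocus_neg : K r ≤ (swapStar ∘ₗ (V r).subtype).eqLocus (-(V r).subtype) := by
  refine Submodule.span_le.2 ?_
  rintro u ⟨f, hf⟩
  simp [hf, swapStar_swapStar]

lemma disjoint_eqLocus_K :
    Disjoint ((swapStar ∘ₗ (V r).subtype).eqLocus (V r).subtype) (K r) := by
  refine Submodule.disjoint_def.2 fun u hfix hK => ?_
  have hanti := K_le_eqLocus_neg hK
  simp only [LinearMap.mem_eqLocus, LinearMap.coe_comp, Function.comp_apply, Submodule.coe_subtype,
    LinearMap.neg_apply] at hfix hanti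
  exact Subtype.ext (self_eq_neg.1 (hfix.symm.trans hanti))

lemma linearIndependent_mkQ_K {ι : Type*} {v : ι → V r} (hv : LinearIndependent ℝ v)
    (hfix : ∀ i, swapStar (v i : MvPolynomial (Fin 2) ℝ) = v i) :
    LinearIndependent ℝ ((K r).mkQ ∘ v) :=
  hv.map <| by
    rw [Submodule.ker_mkQ]
    exact disjoint_eqLocus_K.mono_left (Submodule.span_le.2 (Set.range_subset_iff.2 hfix))

end Quotient

/-- For odd `r`, the dimension of the kernel of `Φ_sym` (the eigenspace of `Φ_sym`
for the eigenvalue `0`) is at least `(r-1)/6` if `r ≡ 1 (mod 6)`, at least `(r+3)/6`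
if `r ≡ 3 (mod 6)`, and at least `(r+1)/6` if `r ≡ 5 (mod 6)`.  Here `Φ_sym` is the
operator induced by `Φ` on the quotient `V_sym = V / K`, characterized by the
compatibility hypothesis `hsym`. -/
theorem dim_ker_PhiSym (r : ℕ) (hr : Odd r)
    (PhiSym : (↥(V r) ⧸ K r) →ₗ[ℝ] (↥(V r) ⧸ K r))
    (hsym : ∀ f g : ↥(V r),
      Phi (f : MvPolynomial (Fin 2) ℝ) = (g : MvPolynomial (Fin 2) ℝ) →
      PhiSym (Submodule.Quotient.mk f) = Submodule.Quotient.mk g) :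
    (r % 6 = 1 → (r - 1) / 6 ≤ Module.finrank ℝ ↥(LinearMap.ker PhiSym)) ∧
    (r % 6 = 3 → (r + 3) / 6 ≤ Module.finrank ℝ ↥(LinearMap.ker PhiSym)) ∧
    (r % 6 = 5 → (r + 1) / 6 ≤ Module.finrank ℝ ↥(LinearMap.ker PhiSym)) := by
  suffices hN : (r + 3) / 6 ≤ Module.finrank ℝ (LinearMap.ker PhiSym) by
    refine ⟨fun _ => le_trans ?_ hN, fun _ => hN, fun _ => le_trans ?_ hN⟩ <;> omega
  let exponent (m : ℕ) : ℕ := (r - 3 * m) / 2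
  have hmem (k : Fin ((r + 3) / 6)) :
      cubic ^ (2 * (k : ℕ) + 1) * quadratic ^ exponent (2 * k + 1) ∈ V r := by
    have hdeg : 3 * (2 * (k : ℕ) + 1) + 2 * exponent (2 * k + 1) = r := by
      have := k.2
      have := Nat.odd_iff.mp hr
      simp only [exponent]
      omega
    have h := cubic_pow_mul_quadratic_pow_mem_V (2 * k + 1) (exponent (2 * k + 1))
    rwa [hdeg] at h
  let v (k : Fin ((r + 3) / 6)) : V r := ⟨_, hmem k⟩
  have hv : LinearIndependent ℝ v := .of_comp (V r).subtype <|
    (linearIndependent_cubic_pow_mul_quadratic_pow exponent).comp _ fun k l h => by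
      simp only [add_left_inj, mul_eq_mul_left_iff] at h
      omega
  have hker (k) : (K r).mkQ (v k) ∈ LinearMap.ker PhiSym := by
    rw [LinearMap.mem_ker, Submodule.mkQ_apply, hsym (v k) 0 ?_, Submodule.Quotient.mk_zero]
    exact Phi_cubic_pow_mul_quadratic_pow (odd_two_mul_add_one _) _
  have hli := LinearIndependent.of_comp (LinearMap.ker PhiSym).subtype
    (v := fun k => (⟨_, hker k⟩ : LinearMap.ker PhiSym))
    (linearIndependent_mkQ_K hv fun _ => swapStar_cubic_pow_mul_quadratic_pow _ _)
  simpa using hli.fintype_card_le_finrank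
end
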